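/- arXiv:1808.01375 — 4 statements merged into one kernel-verified Lean document; each statement's English description precedes it below -/
import Mathlib

section
/- For every right R-module N and every graded right R-module M of finite graded length, there is a natural isomorphism Hom_R(N, qM) ≅ Hom_{Gr-R}(pN, M). Thus on modules of finite graded length, p behaves as a left adjoint to q. -/
open DirectSum

/-- A `ℤ`-graded module over a `ℤ`-graded ring `R` with grading `𝒜`. -/
structure GradedMod (R : Type) [Ring R] (𝒜 : ℤ → AddSubgroup R) where
  carrier : Type
  [acg : AddCommGroup carrier]
  [mod : Module R carrier]
  grading : ℤ → AddSubgroup carrier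
  decomp : DirectSum.Decomposition grading
  smul_mem : ∀ {i j : ℤ} {r : R} {m : carrier},
    r ∈ 𝒜 i → m ∈ grading j → r • m ∈ grading (i + j)

attribute [instance] GradedMod.acg GradedMod.mod

/-- A degree-zero morphism of graded modules. -/
structure GradedHom (R : Type) [Ring R] {𝒜 : ℤ → AddSubgroup R}
    (M N : GradedMod R 𝒜) where
  toFun : M.carrier →ₗ[R] N.carrier
  map_mem : ∀ (n : ℤ) (x : M.carrier), x ∈ M.grading n → toFun x ∈ N.grading n

/-- `P` is (isomorphic in `Gr-R` to) the pull-up `pN` of the module `N`: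
each homogeneous component of `P` is a copy of `N`, compatibly with the action of
homogeneous elements of `R` (which shift degrees). -/
structure IsPullUp (R : Type) [Ring R] (𝒜 : ℤ → AddSubgroup R)
    (N : Type) [AddCommGroup N] [Module R N] (P : GradedMod R 𝒜) where
  equiv : ∀ n : ℤ, P.grading n ≃+ N
  compat : ∀ (j n : ℤ) (r : R) (m : P.carrier) (hr : r ∈ 𝒜 j) (hm : m ∈ P.grading n),
    equiv (j + n) ⟨r • m, P.smul_mem hr hm⟩ = r • (equiv n ⟨m, hm⟩)

/-- A module is gradable if it admits a compatible `ℤ`-grading. -/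
def IsGradable (R : Type) [Ring R] (𝒜 : ℤ → AddSubgroup R)
    (N : Type) [AddCommGroup N] [Module R N] : Prop :=
  ∃ ℳ : ℤ → AddSubgroup N, Nonempty (DirectSum.Decomposition ℳ) ∧
    ∀ ⦃i j : ℤ⦄ ⦃r : R⦄ ⦃m : N⦄, r ∈ 𝒜 i → m ∈ ℳ j → r • m ∈ ℳ (i + j)

/-- The ring of degree-zero endomorphisms of a graded module,
i.e. its endomorphism ring in `Gr-R`, as a subring of the full endomorphism ring. -/
def gradedEnd (R : Type) [Ring R] {𝒜 : ℤ → AddSubgroup R} (M : GradedMod R 𝒜) :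
    Subring (Module.End R M.carrier) where
  carrier := {f | ∀ (n : ℤ) (x : M.carrier), x ∈ M.grading n → f x ∈ M.grading n}
  mul_mem' := fun hf hg n x hx => hf n _ (hg n x hx)
  one_mem' := fun _ _ hx => hx
  add_mem' := fun hf hg n x hx => add_mem (hf n x hx) (hg n x hx)
  zero_mem' := fun n _ _ => zero_mem (M.grading n)
  neg_mem' := fun hf n x hx => neg_mem (hf n x hx)

/-- Indecomposability of a module, via idempotent endomorphisms. -/
def IsIndec (R : Type) [Ring R] (N : Type) [AddCommGroup N] [Module R N] : Prop :=
  Nontrivial N ∧ ∀ f : Module.End R N, f * f = f → f = 0 ∨ f = 1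

/-- Indecomposability of a graded module in `Gr-R`, via idempotent degree-zero
endomorphisms. -/
def GradedIndec (R : Type) [Ring R] {𝒜 : ℤ → AddSubgroup R} (M : GradedMod R 𝒜) : Prop :=
  Nontrivial M.carrier ∧
    ∀ f ∈ gradedEnd R M, f * f = f → f = 0 ∨ f = 1

/-- The initial subring `R₀ = 𝒜 0` of a graded ring. -/
def degZero (R : Type) [Ring R] (𝒜 : ℤ → AddSubgroup R) [GradedRing 𝒜] : Subring R where
  carrier := 𝒜 0
  one_mem' := SetLike.one_mem_graded 𝒜
  mul_mem' := fun {a b} ha hb => by simpa using SetLike.mul_mem_graded ha hb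
  add_mem' := fun ha hb => add_mem ha hb
  zero_mem' := zero_mem _
  neg_mem' := fun h => neg_mem h

instance gradingSMul (R : Type) [Ring R] (𝒜 : ℤ → AddSubgroup R) [GradedRing 𝒜]
    (M : GradedMod R 𝒜) (n : ℤ) : SMul (degZero R 𝒜) (M.grading n) :=
  ⟨fun r m => ⟨(r : R) • (m : M.carrier), by
    have hr : (r : R) ∈ 𝒜 0 := r.2
    simpa using M.smul_mem hr m.2⟩⟩

instance gradingMulAction (R : Type) [Ring R] (𝒜 : ℤ → AddSubgroup R) [GradedRing 𝒜]
    (M : GradedMod R 𝒜) (n : ℤ) : MulAction (degZero R 𝒜) (M.grading n) where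
  one_smul m := Subtype.ext
    (show ((1 : degZero R 𝒜) : R) • (m : M.carrier) = m by simp)
  mul_smul r s m := Subtype.ext
    (show ((r * s : degZero R 𝒜) : R) • (m : M.carrier)
        = (r : R) • ((s : R) • (m : M.carrier)) by simp [mul_smul])

instance gradingDistribMulAction (R : Type) [Ring R] (𝒜 : ℤ → AddSubgroup R) [GradedRing 𝒜]
    (M : GradedMod R 𝒜) (n : ℤ) : DistribMulAction (degZero R 𝒜) (M.grading n) where
  smul_zero r := Subtype.ext
    (show (r : R) • ((0 : M.grading n) : M.carrier) = ((0 : M.grading n) : M.carrier) by simp)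
  smul_add r x y := Subtype.ext
    (show (r : R) • ((x + y : M.grading n) : M.carrier)
        = (r : R) • (x : M.carrier) + (r : R) • (y : M.carrier) by
      simp [smul_add])

/-- Each homogeneous component of a graded module is a module over the initial
subring `R₀`. -/
instance gradingModule (R : Type) [Ring R] (𝒜 : ℤ → AddSubgroup R) [GradedRing 𝒜]
    (M : GradedMod R 𝒜) (n : ℤ) : Module (degZero R 𝒜) (M.grading n) where
  add_smul r s m := Subtype.ext
    (show ((r + s : degZero R 𝒜) : R) • (m : M.carrier)
        = (r : R) • (m : M.carrier) + (s : R) • (m : M.carrier) by simp [add_smul])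
  zero_smul m := Subtype.ext
    (show ((0 : degZero R 𝒜) : R) • (m : M.carrier) = ((0 : M.grading n) : M.carrier) by simp)

/-- A module is pure-projective if it is a direct summand of a direct sum of
finitely presented modules. -/
def IsPureProjective (S : Type) [Ring S] (P : Type) [AddCommGroup P] [Module S P] : Prop :=
  ∃ (ι : Type) (F : ι → ModuleCat.{0} S), (∀ i, Module.FinitePresentation S (F i)) ∧
    ∃ (s : P →ₗ[S] ⨁ i, (F i : Type)) (r : (⨁ i, (F i : Type)) →ₗ[S] P),
      r.comp s = LinearMap.id

/-- `R` has finite representation type: finitely many finitely generated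
indecomposable modules up to isomorphism. -/
def FinRepType (R : Type) [Ring R] : Prop :=
  ∃ (n : ℕ) (F : Fin n → ModuleCat.{0} R),
    ∀ (N : Type) [AddCommGroup N] [Module R N], Module.Finite R N → IsIndec R N →
      ∃ i, Nonempty (N ≃ₗ[R] (F i : Type))

/-- There are only finitely many finitely generated indecomposable gradable
modules up to isomorphism. -/
def FinManyGradable (R : Type) [Ring R] (𝒜 : ℤ → AddSubgroup R) : Prop :=
  ∃ (n : ℕ) (F : Fin n → ModuleCat.{0} R),
    ∀ (N : Type) [AddCommGroup N] [Module R N], Module.Finite R N → IsIndec R N →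
      IsGradable R 𝒜 N → ∃ i, Nonempty (N ≃ₗ[R] (F i : Type))

/-- `b` is a bound on the graded lengths of all finitely generated indecomposable
graded modules. -/
def BoundedGrLength (R : Type) [Ring R] (𝒜 : ℤ → AddSubgroup R) (b : ℕ) : Prop :=
  ∀ M : GradedMod R 𝒜, Module.Finite R M.carrier → GradedIndec R M →
    ∀ m n : ℤ, M.grading m ≠ ⊥ → M.grading n ≠ ⊥ → m - n + 1 ≤ (b : ℤ)

/-- A module `P` has finite type if it lies in `Add X` for some finite length module `X`. -/
def HasFiniteType (S : Type) [Ring S] (P : Type) [AddCommGroup P] [Module S P] : Prop :=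
  ∃ X : ModuleCat.{0} S, (IsNoetherian S X ∧ IsArtinian S X) ∧
    ∃ (ι : Type) (s : P →ₗ[S] ⨁ _i : ι, (X : Type)) (r : (⨁ _i : ι, (X : Type)) →ₗ[S] P),
      r.comp s = LinearMap.id

/-- A Prüfer module: a locally nilpotent surjective endomorphism with nonzero
kernel of finite length. -/
def IsPrufer (S : Type) [Ring S] (P : Type) [AddCommGroup P] [Module S P]
    (φ : Module.End S P) : Prop :=
  Function.Surjective φ ∧ (∀ x : P, ∃ n : ℕ, (φ ^ n) x = 0) ∧
    LinearMap.ker φ ≠ ⊥ ∧ IsNoetherian S (LinearMap.ker φ) ∧ IsArtinian S (LinearMap.ker φ)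

/-- The opposite grading on `Rᵐᵒᵖ`. -/
def opGrading (R : Type) [Ring R] (𝒜 : ℤ → AddSubgroup R) : ℤ → AddSubgroup Rᵐᵒᵖ :=
  fun n => (𝒜 n).map (MulOpposite.opAddEquiv : R ≃+ Rᵐᵒᵖ).toAddMonoidHom

/-- The dual of a linear map, as a map of right modules (`Rᵐᵒᵖ`-modules). -/
def dualHom (R : Type) [Ring R] {P Q : Type} [AddCommGroup P] [Module R P]
    [AddCommGroup Q] [Module R Q] (f : P →ₗ[R] Q) :
    (Q →ₗ[R] R) →ₗ[Rᵐᵒᵖ] (P →ₗ[R] R) where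
  toFun φ := φ.comp f
  map_add' φ ψ := LinearMap.ext fun _ => rfl
  map_smul' r φ := LinearMap.ext fun _ => rfl

/-- A pure submodule: every finite system of linear equations with constants in `A`
solvable in `P` is solvable in `A`. -/
def IsPureSubmodule (S : Type) [Ring S] {P : Type} [AddCommGroup P] [Module S P]
    (A : Submodule S P) : Prop :=
  ∀ (k l : ℕ) (c : Matrix (Fin k) (Fin l) S) (a : Fin k → P), (∀ i, a i ∈ A) →
    (∃ x : Fin l → P, ∀ i, ∑ j, c i j • x j = a i) →
    ∃ x : Fin l → P, (∀ j, x j ∈ A) ∧ ∀ i, ∑ j, c i j • x j = a i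

/-- The submodule of the pull-up `pN` generated by the components in negative degrees. -/
def negPart (R : Type) [Ring R] {𝒜 : ℤ → AddSubgroup R} (P : GradedMod R 𝒜) :
    Submodule R P.carrier :=
  Submodule.span R (⋃ i : ℤ, ⋃ _ : i < 0, (P.grading i : Set P.carrier))

/-- The additive subgroup `N·R_{≥k}` (for left modules, `R_{≥k}·N`). -/
def NRge (R : Type) [Ring R] (𝒜 : ℤ → AddSubgroup R)
    (N : Type) [AddCommGroup N] [Module R N] (k : ℕ) : AddSubgroup N :=
  AddSubgroup.closure {x | ∃ j : ℤ, (k : ℤ) ≤ j ∧ ∃ r ∈ 𝒜 j, ∃ m : N, x = r • m}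

/-- The subquotient `N·R_{≥ d+1} / N·R_{≥ d+2}`. -/
def NRgeSubQuot (R : Type) [Ring R] (𝒜 : ℤ → AddSubgroup R)
    (N : Type) [AddCommGroup N] [Module R N] (d : ℕ) : Type :=
  NRge R 𝒜 N (d + 1) ⧸ (NRge R 𝒜 N (d + 2)).addSubgroupOf (NRge R 𝒜 N (d + 1))

instance (R : Type) [Ring R] (𝒜 : ℤ → AddSubgroup R)
    (N : Type) [AddCommGroup N] [Module R N] (d : ℕ) :
    AddCommGroup (NRgeSubQuot R 𝒜 N d) :=
  inferInstanceAs (AddCommGroup (_ ⧸ _))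

/-- An irreducible map between modules. -/
def IsIrreducibleMap (Λ : Type) [Ring Λ] {U V : Type} [AddCommGroup U] [Module Λ U]
    [AddCommGroup V] [Module Λ V] (f : U →ₗ[Λ] V) : Prop :=
  (¬ ∃ g : V →ₗ[Λ] U, g.comp f = LinearMap.id) ∧
  (¬ ∃ g : V →ₗ[Λ] U, f.comp g = LinearMap.id) ∧
  ∀ (W : Type) [AddCommGroup W] [Module Λ W], Module.Finite Λ W →
    ∀ (h : U →ₗ[Λ] W) (g : W →ₗ[Λ] V), g.comp h = f →
      (∃ h' : W →ₗ[Λ] U, h'.comp h = LinearMap.id) ∨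
      (∃ g' : V →ₗ[Λ] W, g.comp g' = LinearMap.id)

/-
The graded morphism attached to `f : N → qM` sends the copy `x eₙ` of `x` in degree `n` to the
degree-`n` component of `f x`; it is `R`-linear because homogeneous scalars shift degrees of `pN`
and of `M` alike, and `f x` is recovered as the sum of its components. Conversely a graded
morphism `g` is determined by `f`: `g (x eₙ)` lies in `Mₙ`, and since `M` has finite graded length
the sum `∑ᵢ g (x eᵢ)` is finite, so its degree-`n` component is `g (x eₙ)`.
-/

attribute [local instance] GradedMod.decomp

namespace GradedMod

variable {R : Type} [Ring R] {𝒜 : ℤ → AddSubgroup R}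

section Proj

variable (M : GradedMod R 𝒜)

def proj (n : ℤ) : M.carrier →+ M.carrier :=
  (M.grading n).subtype.comp
    ((DFinsupp.evalAddMonoidHom n).comp (decomposeAddEquiv M.grading).toAddMonoidHom)

lemma proj_apply (n : ℤ) (y : M.carrier) : M.proj n y = decompose M.grading y n := rfl

variable {M}

lemma proj_mem (n : ℤ) (y : M.carrier) : M.proj n y ∈ M.grading n :=
  (decompose M.grading y n).2

lemma proj_of_mem_same {n : ℤ} {y : M.carrier} (hy : y ∈ M.grading n) : M.proj n y = y :=
  decompose_of_mem_same M.grading hy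

lemma proj_of_mem_ne {i n : ℤ} {y : M.carrier} (hy : y ∈ M.grading i) (hin : i ≠ n) :
    M.proj n y = 0 :=
  decompose_of_mem_ne M.grading hy hin

lemma proj_smul_of_mem {j : ℤ} {r : R} (hr : r ∈ 𝒜 j) (n : ℤ) (y : M.carrier) :
    M.proj (j + n) (r • y) = r • M.proj n y := by
  induction y using DirectSum.Decomposition.inductionOn M.grading with
  | zero => simp
  | @homogeneous i m =>
    obtain ⟨m, hm⟩ := m
    obtain rfl | hin := eq_or_ne i n
    · rw [proj_of_mem_same (M.smul_mem hr hm), proj_of_mem_same hm]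
    · rw [proj_of_mem_ne (M.smul_mem hr hm) (by omega), proj_of_mem_ne hm hin, smul_zero]
  | add a b ha hb => rw [smul_add, map_add, ha, hb, map_add, smul_add]

lemma finsum_proj (y : M.carrier) : ∑ᶠ i, M.proj i y = y := by
  classical
  have hsupp : Function.support (M.proj · y) ⊆ (decompose M.grading y).support := by
    intro i hi
    simpa [proj_apply] using hi
  rw [finsum_eq_finsetSum_of_support_subset _ hsupp]
  exact sum_support_decompose M.grading y

lemma proj_finsum_of_mem (hM : {n : ℤ | M.grading n ≠ ⊥}.Finite) {t : ℤ → M.carrier}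
    (ht : ∀ i, t i ∈ M.grading i) (n : ℤ) : M.proj n (∑ᶠ i, t i) = t n := by
  have hsupp : Function.support t ⊆ ↑(insert n hM.toFinset) := by
    intro i hi
    refine Finset.mem_insert_of_mem (hM.mem_toFinset.2 fun hbot => hi ?_)
    simpa [hbot] using ht i
  rw [finsum_eq_finsetSum_of_support_subset _ hsupp, map_sum,
    Finset.sum_eq_single_of_mem n (Finset.mem_insert_self _ _)
      fun i _ hin => proj_of_mem_ne (ht i) hin]
  exact proj_of_mem_same (ht n)

end Proj

section Components

variable (P : GradedMod R 𝒜) {X : Type} [AddCommGroup X]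

lemma toAddMonoid_decompose_of_mem (h : ∀ n, P.grading n →+ X) {n : ℤ} {x : P.carrier}
    (hx : x ∈ P.grading n) : toAddMonoid h (decompose P.grading x) = h n ⟨x, hx⟩ := by
  rw [decompose_of_mem P.grading hx, toAddMonoid_of]

variable [Module R X]

lemma linearMap_ext_of_mem {g g' : P.carrier →ₗ[R] X}
    (h : ∀ n, ∀ x ∈ P.grading n, g x = g' x) : g = g' := by
  ext x
  induction x using DirectSum.Decomposition.inductionOn P.grading with
  | zero => simp
  | homogeneous m => exact h _ _ m.2
  | add a b ha hb => rw [map_add, map_add, ha, hb]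

variable [Decomposition 𝒜]

def linearMapOfComponents (h : ∀ n, P.grading n →+ X)
    (hsmul : ∀ (j n : ℤ) (r : R) (m : P.carrier) (hr : r ∈ 𝒜 j) (hm : m ∈ P.grading n),
      h (j + n) ⟨r • m, P.smul_mem hr hm⟩ = r • h n ⟨m, hm⟩) :
    P.carrier →ₗ[R] X where
  toFun x := toAddMonoid h (decompose P.grading x)
  map_add' a b := by rw [decompose_add, map_add]
  map_smul' r x := by
    rw [RingHom.id_apply]
    induction r using DirectSum.Decomposition.inductionOn 𝒜 generalizing x with
    | zero => simp
    | homogeneous r =>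
      obtain ⟨r, hr⟩ := r
      induction x using DirectSum.Decomposition.inductionOn P.grading with
      | zero => simp
      | homogeneous m =>
        obtain ⟨m, hm⟩ := m
        rw [P.toAddMonoid_decompose_of_mem h (P.smul_mem hr hm : r • m ∈ P.grading (_ + _)),
          P.toAddMonoid_decompose_of_mem h hm]
        exact hsmul _ _ r m hr hm
      | add a b ha hb => rw [smul_add, decompose_add, map_add, ha, hb, decompose_add, map_add,
          smul_add]
    | add a b ha hb => rw [add_smul, decompose_add, map_add, ha, hb, add_smul]

lemma linearMapOfComponents_apply_of_mem (h : ∀ n, P.grading n →+ X) hsmul {n : ℤ}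
    {x : P.carrier} (hx : x ∈ P.grading n) :
    P.linearMapOfComponents h hsmul x = h n ⟨x, hx⟩ :=
  P.toAddMonoid_decompose_of_mem h hx

end Components

end GradedMod

lemma GradedHom.ext {R : Type} [Ring R] {𝒜 : ℤ → AddSubgroup R} {M N : GradedMod R 𝒜}
    {g g' : GradedHom R M N} (h : g.toFun = g'.toFun) : g = g' := by
  cases g
  cases g'
  congr

namespace IsPullUp

variable {R : Type} [Ring R] {𝒜 : ℤ → AddSubgroup R} [Decomposition 𝒜]
  {N : Type} [AddCommGroup N] [Module R N] {P : GradedMod R 𝒜} (pu : IsPullUp R 𝒜 N P)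
  {M : GradedMod R 𝒜}

def lift (f : N →ₗ[R] M.carrier) : GradedHom R P M where
  toFun := P.linearMapOfComponents
    (fun n => (M.proj n).comp (f.toAddMonoidHom.comp (pu.equiv n).toAddMonoidHom))
    (fun j n r m hr hm => by
      simp only [AddMonoidHom.coe_comp, Function.comp_apply, AddEquiv.coe_toAddMonoidHom,
        LinearMap.toAddMonoidHom_coe]
      rw [pu.compat j n r m hr hm, map_smul, GradedMod.proj_smul_of_mem hr])
  map_mem n x hx := by
    rw [GradedMod.linearMapOfComponents_apply_of_mem _ _ _ hx]
    exact GradedMod.proj_mem n _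

lemma lift_apply_equiv_symm (f : N →ₗ[R] M.carrier) (n : ℤ) (y : N) :
    (pu.lift f).toFun ((pu.equiv n).symm y) = M.proj n (f y) := by
  simp [lift, GradedMod.linearMapOfComponents_apply_of_mem _ _ _ ((pu.equiv n).symm y).2]

end IsPullUp

/-- if `M` has finite graded length then
`Hom_R(N, qM) ≅ Hom_{Gr-R}(pN, M)`, via `g ↦ (x ↦ ∑ᵢ g(x eᵢ))`. -/
theorem stmt_1 (R : Type) [Ring R] (𝒜 : ℤ → AddSubgroup R) [GradedRing 𝒜]
    (M : GradedMod R 𝒜) (hM : {n : ℤ | M.grading n ≠ ⊥}.Finite)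
    (N : Type) [AddCommGroup N] [Module R N]
    (P : GradedMod R 𝒜) (pu : IsPullUp R 𝒜 N P) (f : N →ₗ[R] M.carrier) :
    ∃! g : GradedHom R P M,
      ∀ x : N, f x = ∑ᶠ i : ℤ, g.toFun (((pu.equiv i).symm x : P.grading i) : P.carrier) := by
  refine ⟨pu.lift f, fun y => ?_, fun g hg => ?_⟩
  · simp only [pu.lift_apply_equiv_symm, GradedMod.finsum_proj]
  · refine GradedHom.ext (P.linearMap_ext_of_mem fun n x hx => ?_)
    obtain ⟨y, hy⟩ := (pu.equiv n).symm.surjective ⟨x, hx⟩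
    have hxy : x = (pu.equiv n).symm y := by rw [hy]
    rw [hxy, pu.lift_apply_equiv_symm, hg y,
      GradedMod.proj_finsum_of_mem hM fun i => g.map_mem i _ ((pu.equiv i).symm y).2]
end

section
/- For any graded right R-module M, there is an isomorphism of graded modules pqM ≅ ⊕_{i∈ℤ} M[i], where M[i] denotes the i-th shift of M. Consequently, if N is gradable with N ≅ qM, then pN ≅ ⊕_{i∈ℤ} M[i] and qpN ≅ N^{(ω)} (a countable direct sum of copies of N). -/
open DirectSum

/-!
A homogeneous element of `pqM` of degree `n` is a copy of some `m ∈ M`; writing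
`m = ∑ l, m_l` with `m_l ∈ M_l`, send it to the element of `⨁ i, M` having `m_l` at index
`l - n`. There `m_l` lies in `M_{n + i}` for `i = l - n`, i.e. in degree `n` of `M[i]`, so the
map preserves degrees; it is `R`-linear since a homogeneous `r` of degree `j` raises both `n`
and `l` by `j`; and the same recipe, applied twice, is the identity because `l - (l - n) = n`.
Forgetting the grading and reindexing `ℤ ≃ ℕ` gives `qpN ≅ N^(ω)`.
-/

attribute [local instance] GradedMod.decomp

namespace DirectSum

section Regrade

variable {ι M : Type*} [AddCommGroup ι] [DecidableEq ι] [AddCommGroup M]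
  (ℳ : ι → AddSubgroup M) [Decomposition ℳ]

def regrade : (⨁ _ : ι, M) →+ ⨁ _ : ι, M :=
  toAddMonoid fun n =>
    (toAddMonoid fun l => (of (fun _ => M) (l - n)).comp (ℳ l).subtype).comp
      (decomposeAddEquiv ℳ).toAddMonoidHom

variable {ℳ}

theorem regrade_of_of_mem {n l : ι} {m : M} (hm : m ∈ ℳ l) :
    regrade ℳ (of _ n m) = of _ (l - n) m := by
  simp [regrade, decompose_of_mem ℳ hm]

theorem regrade_regrade (x : ⨁ _ : ι, M) : regrade ℳ (regrade ℳ x) = x := by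
  suffices h : (regrade ℳ).comp (regrade ℳ) = AddMonoidHom.id _ from DFunLike.congr_fun h x
  refine addHom_ext fun n m => ?_
  induction m using Decomposition.inductionOn ℳ with
  | zero => simp
  | homogeneous m =>
    simp [regrade_of_of_mem m.2]
  | add m m' hm hm' =>
    simp_all

theorem regrade_of_apply (n i : ι) (m : M) :
    regrade ℳ (of _ n m) i = decompose ℳ m (n + i) := by
  induction m using Decomposition.inductionOn ℳ with
  | zero => simp
  | @homogeneous l m =>
    rw [regrade_of_of_mem m.2, decompose_coe]
    obtain rfl | h := eq_or_ne i (l - n)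
    · rw [add_sub_cancel, of_eq_same, of_eq_same]
    · rw [of_eq_of_ne _ _ _ h, of_eq_of_ne _ _ _ (by grind), ZeroMemClass.coe_zero]
  | add m m' hm hm' =>
    simp_all

theorem regrade_of_smul {R : Type*} [Ring R] [Module R M] {𝒜 : ι → AddSubgroup R}
    (hℳ : ∀ {i j : ι} {r : R} {m : M}, r ∈ 𝒜 i → m ∈ ℳ j → r • m ∈ ℳ (i + j))
    {j : ι} {r : R} (hr : r ∈ 𝒜 j) (n : ι) (m : M) :
    regrade ℳ (of _ (j + n) (r • m)) = r • regrade ℳ (of _ n m) := by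
  induction m using Decomposition.inductionOn ℳ with
  | zero => simp
  | @homogeneous l m =>
    rw [regrade_of_of_mem (hℳ hr m.2), regrade_of_of_mem m.2, add_sub_add_left_eq_sub]
    exact of_smul ..
  | add m m' hm hm' =>
    simp only [smul_add, map_add, hm, hm']

variable (ℳ) in
def regradeEquiv : (⨁ _ : ι, M) ≃+ ⨁ _ : ι, M :=
  { regrade ℳ with
    invFun := regrade ℳ
    left_inv := regrade_regrade
    right_inv := regrade_regrade }

end Regrade

end DirectSum

namespace IsPullUp

variable {R : Type} [Ring R] {𝒜 : ℤ → AddSubgroup R} {N : Type} [AddCommGroup N] [Module R N]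
  {P : GradedMod R 𝒜}

def congrLinearEquiv (pu : IsPullUp R 𝒜 N P) {N' : Type} [AddCommGroup N'] [Module R N']
    (e : N ≃ₗ[R] N') : IsPullUp R 𝒜 N' P where
  equiv n := (pu.equiv n).trans e.toAddEquiv
  compat j n r m hr hm := by
    simp only [AddEquiv.trans_apply, pu.compat j n r m hr hm]
    exact e.map_smul r _

def addEquivDirectSum (pu : IsPullUp R 𝒜 N P) : P.carrier ≃+ ⨁ _ : ℤ, N :=
  (decomposeAddEquiv P.grading).trans (DFinsupp.mapRange.addEquiv pu.equiv)

theorem addEquivDirectSum_of_mem (pu : IsPullUp R 𝒜 N P) {n : ℤ} {x : P.carrier}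
    (hx : x ∈ P.grading n) :
    pu.addEquivDirectSum x = of _ n (pu.equiv n ⟨x, hx⟩) := by
  rw [addEquivDirectSum, AddEquiv.trans_apply, decomposeAddEquiv_apply,
    decompose_of_mem P.grading hx]
  exact DFinsupp.mapRange_single (hf := fun i => map_zero (pu.equiv i))

variable [GradedRing 𝒜] {M : GradedMod R 𝒜}

theorem regrade_addEquivDirectSum_smul (pu : IsPullUp R 𝒜 M.carrier P) (r : R) (x : P.carrier) :
    regrade M.grading (pu.addEquivDirectSum (r • x))
      = r • regrade M.grading (pu.addEquivDirectSum x) := by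
  induction x using Decomposition.inductionOn P.grading with
  | zero => simp
  | @homogeneous n x =>
    induction r using Decomposition.inductionOn 𝒜 with
    | zero => simp
    | @homogeneous j r =>
      rw [pu.addEquivDirectSum_of_mem (P.smul_mem r.2 x.2), pu.addEquivDirectSum_of_mem x.2,
        pu.compat j n r x r.2 x.2, regrade_of_smul M.smul_mem r.2]
    | add r r' hr hr' =>
      rw [add_smul, map_add, map_add, hr, hr', add_smul]
  | add x x' hx hx' =>
    simp only [smul_add, map_add, hx, hx']

/-- The isomorphism `pqM ≅ ⨁ i, M[i]`. -/
def shiftEquiv (pu : IsPullUp R 𝒜 M.carrier P) : P.carrier ≃ₗ[R] ⨁ _ : ℤ, M.carrier :=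
  (pu.addEquivDirectSum.trans (regradeEquiv M.grading)).toLinearEquiv
    pu.regrade_addEquivDirectSum_smul

theorem shiftEquiv_apply_mem (pu : IsPullUp R 𝒜 M.carrier P) {n : ℤ} {x : P.carrier}
    (hx : x ∈ P.grading n) (i : ℤ) : pu.shiftEquiv x i ∈ M.grading (n + i) := by
  change regrade M.grading (pu.addEquivDirectSum x) i ∈ _
  rw [pu.addEquivDirectSum_of_mem hx, regrade_of_apply]
  exact SetLike.coe_mem _

end IsPullUp

/-- `pqM ≅ ⊕_{i∈ℤ} M[i]` as graded modules; consequently, for `N ≅ qM`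
gradable, `pN ≅ ⊕_{i∈ℤ} M[i]` and `qpN ≅ N^{(ω)}`. -/
theorem stmt_4 (R : Type) [Ring R] (𝒜 : ℤ → AddSubgroup R) [GradedRing 𝒜]
    (M : GradedMod R 𝒜)
    (P : GradedMod R 𝒜) (pu : IsPullUp R 𝒜 M.carrier P)
    (N : Type) [AddCommGroup N] [Module R N] (eN : N ≃ₗ[R] M.carrier)
    (P' : GradedMod R 𝒜) (pu' : IsPullUp R 𝒜 N P') :
    (∃ e : P.carrier ≃ₗ[R] DirectSum ℤ (fun _ => M.carrier),
      ∀ (n : ℤ) (x : P.carrier), x ∈ P.grading n → ∀ i : ℤ, e x i ∈ M.grading (n + i)) ∧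
    (∃ e : P'.carrier ≃ₗ[R] DirectSum ℤ (fun _ => M.carrier),
      ∀ (n : ℤ) (x : P'.carrier), x ∈ P'.grading n → ∀ i : ℤ, e x i ∈ M.grading (n + i)) ∧
    Nonempty (P'.carrier ≃ₗ[R] DirectSum ℕ (fun _ => N)) := by
  let puM : IsPullUp R 𝒜 M.carrier P' := pu'.congrLinearEquiv eN
  refine ⟨⟨pu.shiftEquiv, fun _ _ hx => pu.shiftEquiv_apply_mem hx⟩,
    ⟨puM.shiftEquiv, fun _ _ hx => puM.shiftEquiv_apply_mem hx⟩, ⟨?_⟩⟩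
  exact puM.shiftEquiv.trans ((DFinsupp.mapRange.linearEquiv fun _ => eN.symm).trans
    (lequivCongrLeft R Equiv.intEquivNat))
end

section
/- Let N be a right R-module and M a locally finite graded right R-module of finite graded length. If there exists a split epimorphism g : pN → M in Gr-R, then qM lies in add(N), i.e., qM is a direct summand of a finite direct sum of copies of N. -/
open DirectSum

/-!
Put `u = ε ∘ s : M → N`, where `ε : pN → N` adds up the components, and let `v : N → M`,
`v y = ∑ₘ g (y eₘ)`, be the adjoint transpose of `g` (a finite sum, as `M` is finitely graded).
On `Mₙ`, `v ∘ u = ∑_c g ∘ σ_c ∘ s`, where `σ_c` is the `R`-linear shift of `pN` sending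
`y eₙ` to `y e_{n-c}`. The term `c = 0` is `g ∘ s = 1`; the terms with `c > 0` lower the degree
and those with `c < 0` raise it, so both partial sums are nilpotent. Modulo the two-sided ideal
of endomorphisms of `M` factoring through some `Nᵏ`, which contains `v ∘ u`, the unit
`1 + (raising part)` therefore equals a nilpotent element, so the ideal contains `1`.
-/

section FactorIdeal

variable (R N M : Type) [Ring R] [AddCommGroup N] [Module R N] [AddCommGroup M] [Module R M]

def endFactoringThrough : TwoSidedIdeal (Module.End R M) :=
  .mk' {f | ∃ (k : ℕ) (i : M →ₗ[R] (Fin k → N)) (p : (Fin k → N) →ₗ[R] M), p ∘ₗ i = f}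
    ⟨0, 0, 0, rfl⟩
    (by
      rintro _ _ ⟨k₁, i₁, p₁, rfl⟩ ⟨k₂, i₂, p₂, rfl⟩
      let e : (Fin (k₁ + k₂) → N) ≃ₗ[R] (Fin k₁ → N) × (Fin k₂ → N) :=
        (LinearEquiv.funCongrLeft R N finSumFinEquiv).trans
          (LinearEquiv.sumArrowLequivProdArrow _ _ R N)
      refine ⟨k₁ + k₂, e.symm.toLinearMap ∘ₗ i₁.prod i₂, p₁.coprod p₂ ∘ₗ e.toLinearMap, ?_⟩
      ext x
      simp only [LinearMap.comp_apply, LinearEquiv.coe_coe, LinearEquiv.apply_symm_apply,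
        LinearMap.prod_apply, LinearMap.coprod_apply, LinearMap.add_apply]
      rfl)
    (by
      rintro _ ⟨k, i, p, rfl⟩
      exact ⟨k, i, -p, LinearMap.neg_comp i p⟩)
    (by
      rintro x _ ⟨k, i, p, rfl⟩
      exact ⟨k, i, x ∘ₗ p, rfl⟩)
    (by
      rintro _ y ⟨k, i, p, rfl⟩
      exact ⟨k, i ∘ₗ y, p, rfl⟩)

variable {R N M}

theorem mem_endFactoringThrough {f : Module.End R M} :
    f ∈ endFactoringThrough R N M ↔
      ∃ (k : ℕ) (i : M →ₗ[R] (Fin k → N)) (p : (Fin k → N) →ₗ[R] M), p ∘ₗ i = f :=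
  TwoSidedIdeal.mem_mk' _ _ _ _ _ _ f

theorem comp_mem_endFactoringThrough (v : N →ₗ[R] M) (u : M →ₗ[R] N) :
    v ∘ₗ u ∈ endFactoringThrough R N M :=
  mem_endFactoringThrough.2 ⟨1, LinearMap.pi fun _ => u, v ∘ₗ LinearMap.proj 0, rfl⟩

end FactorIdeal

theorem TwoSidedIdeal.one_mem_of_one_add_add_mem {A : Type*} [Ring A] (I : TwoSidedIdeal A)
    {p q : A} (hp : IsNilpotent p) (hq : IsNilpotent q) (h : 1 + p + q ∈ I) : 1 ∈ I := by
  let π : A →+* I.ringCon.Quotient := I.ringCon.mk'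
  have mem_iff : ∀ x, x ∈ I ↔ π x = 0 := fun x => by
    rw [← TwoSidedIdeal.mem_ker, I.ker_ringCon_mk']
  have hunit : IsUnit (π (1 + q)) := by
    rw [map_add, map_one]
    exact (hq.map π).isUnit_one_add
  have hnil : IsNilpotent (π (1 + q)) := by
    rw [show π (1 + q) = -π p by
      rw [eq_neg_iff_add_eq_zero, ← map_add, add_right_comm]
      exact (mem_iff _).1 h]
    exact (hp.map π).neg
  rw [mem_iff, map_one]
  by_contra h1
  have : Nontrivial I.ringCon.Quotient := ⟨⟨1, 0, h1⟩⟩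
  exact hunit.not_isNilpotent hnil

theorem Finset.sum_eq_add_sum_pos_add_sum_neg {A : Type*} [AddCommMonoid A] {C : Finset ℤ}
    (h0 : 0 ∈ C) (f : ℤ → A) :
    ∑ c ∈ C, f c = f 0 + ∑ c ∈ C with 0 < c, f c + ∑ c ∈ C with c < 0, f c := by
  rw [← C.add_sum_erase f h0, add_assoc,
    ← (C.erase 0).sum_filter_add_sum_filter_not (fun c => 0 < c)]
  congr 3 <;> ext c <;> grind

open scoped Pointwise in
theorem Set.Finite.exists_finset_sub_mem {S : Set ℤ} (hS : S.Finite) :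
    ∃ C : Finset ℤ, 0 ∈ C ∧ ∀ n m, n ∈ S → m ∈ S → n - m ∈ C :=
  ⟨insert 0 (hS.toFinset - hS.toFinset), Finset.mem_insert_self _ _, fun _ _ hn hm =>
    Finset.mem_insert_of_mem (Finset.sub_mem_sub (hS.mem_toFinset.2 hn) (hS.mem_toFinset.2 hm))⟩

theorem AddSubgroup.isNilpotent_of_mapsTo_iSup_lt {R X : Type*} [Semiring R] [AddCommGroup X]
    [Module R X] (ℳ : ℤ → AddSubgroup X) (htop : ∀ x, x ∈ ⨆ n, ℳ n)
    (hfin : {n | ℳ n ≠ ⊥}.Finite) (f : Module.End R X)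
    (hf : ∀ n, ∀ x ∈ ℳ n, f x ∈ ⨆ (k) (_ : k < n), ℳ k) : IsNilpotent f := by
  obtain ⟨lo, hlo⟩ := hfin.bddBelow
  obtain ⟨hi, hhi⟩ := hfin.bddAbove
  let F : ℤ → AddSubgroup X := fun t => ⨆ (k) (_ : k ≤ t), ℳ k
  have hF_step : ∀ t, ∀ x ∈ F t, f x ∈ F (t - 1) := by
    intro t x hx
    refine (iSup₂_le fun k hk => ?_ : F t ≤ (F (t - 1)).comap f.toAddMonoidHom) hx
    intro y hy
    exact (iSup₂_le fun k' hk' => le_iSup₂_of_le k' (by omega) le_rfl :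
      ⨆ (k') (_ : k' < k), ℳ k' ≤ F (t - 1)) (hf k y hy)
  have hF_top : ∀ x, x ∈ F hi := fun x =>
    (iSup_le fun n => by
        by_cases hn : ℳ n = ⊥
        · exact hn ▸ bot_le
        · exact le_iSup₂_of_le n (hhi hn) le_rfl : ⨆ n, ℳ n ≤ F hi) (htop x)
  have hF_pow : ∀ (j : ℕ) x, (f ^ j) x ∈ F (hi - j) := by
    intro j
    induction j with
    | zero => simpa using hF_top
    | succ j ih =>
      intro x
      rw [pow_succ', Module.End.mul_apply, Nat.cast_succ, ← sub_sub]
      exact hF_step _ _ (ih x)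
  refine ⟨(hi - lo + 1).toNat, LinearMap.ext fun x => ?_⟩
  have hF_bot : F (hi - (hi - lo + 1).toNat) = ⊥ :=
    eq_bot_iff.2 <| iSup₂_le fun k hk => by
      by_contra hk'
      have := hlo (show ℳ k ≠ ⊥ from fun h => hk' h.le)
      omega
  have hx := hF_pow (hi - lo + 1).toNat x
  rwa [hF_bot, AddSubgroup.mem_bot] at hx

section Graded

variable {R : Type} [Ring R] {𝒜 : ℤ → AddSubgroup R}

namespace GradedMod

variable (M : GradedMod R 𝒜)

theorem mem_iSup_grading (x : M.carrier) : x ∈ ⨆ n, M.grading n := by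
  let _ := M.decomp
  exact DirectSum.Decomposition.inductionOn M.grading (zero_mem _)
    (fun m => AddSubgroup.mem_iSup_of_mem _ m.2) (fun _ _ => add_mem) x

theorem eq_zero_of_mem_of_eq_bot {n : ℤ} {x : M.carrier} (hx : x ∈ M.grading n)
    (hn : M.grading n = ⊥) : x = 0 :=
  (AddSubgroup.mem_bot).1 (hn ▸ hx)

variable {M} in
theorem linearMap_ext {X : Type} [AddCommGroup X] [Module R X] {f f' : M.carrier →ₗ[R] X}
    (h : ∀ n, ∀ x ∈ M.grading n, f x = f' x) : f = f' := by
  let _ := M.decomp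
  ext x
  induction x using DirectSum.Decomposition.inductionOn M.grading with
  | zero => simp
  | homogeneous m => exact h _ m m.2
  | add x y hx hy => rw [map_add, map_add, hx, hy]

def liftAddHom {X : Type} [AddCommMonoid X] (φ : ∀ n, M.grading n →+ X) : M.carrier →+ X :=
  letI := M.decomp
  (DirectSum.toAddMonoid φ).comp (DirectSum.decomposeAddEquiv M.grading).toAddMonoidHom

theorem liftAddHom_of_mem {X : Type} [AddCommMonoid X] (φ : ∀ n, M.grading n →+ X) {n : ℤ}
    {x : M.carrier} (hx : x ∈ M.grading n) : M.liftAddHom φ x = φ n ⟨x, hx⟩ := by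
  let _ := M.decomp
  simp [liftAddHom, DirectSum.decomposeAddEquiv_apply, DirectSum.decompose_of_mem _ hx]

end GradedMod

variable [GradedRing 𝒜]

variable (𝒜) in
def AddMonoidHom.toLinearMapOfHomogeneous {X Y : Type} [AddCommGroup X] [Module R X]
    [AddCommGroup Y] [Module R Y] (f : X →+ Y)
    (h : ∀ i, ∀ r ∈ 𝒜 i, ∀ x, f (r • x) = r • f x) : X →ₗ[R] Y where
  toFun := f
  map_add' := f.map_add
  map_smul' r x := by
    show f (r • x) = r • f x
    induction r using DirectSum.Decomposition.inductionOn 𝒜 with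
    | zero => simp
    | homogeneous r => exact h _ r r.2 x
    | add r r' hr hr' => rw [add_smul, map_add, hr, hr', add_smul]

def GradedMod.linearMapOfHomogeneous {X : Type} [AddCommGroup X] [Module R X]
    (M : GradedMod R 𝒜) (f : M.carrier →+ X)
    (h : ∀ i j, ∀ r ∈ 𝒜 i, ∀ x ∈ M.grading j, f (r • x) = r • f x) : M.carrier →ₗ[R] X :=
  f.toLinearMapOfHomogeneous 𝒜 fun i r hr x => by
    let _ := M.decomp
    induction x using DirectSum.Decomposition.inductionOn M.grading with
    | zero => simp
    | homogeneous m => exact h i _ r hr m m.2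
    | add x y hx hy => rw [smul_add, map_add, map_add, hx, hy, smul_add]

end Graded

namespace IsPullUp

variable {R : Type} [Ring R] {𝒜 : ℤ → AddSubgroup R} {N : Type} [AddCommGroup N] [Module R N]
  {P M : GradedMod R 𝒜} (pu : IsPullUp R 𝒜 N P) (g : GradedHom R P M) (s : GradedHom R M P)

def iota (n : ℤ) : N →+ P.carrier :=
  (P.grading n).subtype.comp (pu.equiv n).symm.toAddMonoidHom

theorem iota_mem (n : ℤ) (y : N) : pu.iota n y ∈ P.grading n :=
  ((pu.equiv n).symm y).2

theorem equiv_iota (n : ℤ) (y : N) : pu.equiv n ⟨pu.iota n y, pu.iota_mem n y⟩ = y :=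
  (pu.equiv n).apply_symm_apply y

theorem iota_equiv {n : ℤ} {z : P.carrier} (hz : z ∈ P.grading n) :
    pu.iota n (pu.equiv n ⟨z, hz⟩) = z :=
  congrArg Subtype.val ((pu.equiv n).symm_apply_apply ⟨z, hz⟩)

theorem smul_iota {i : ℤ} {r : R} (hr : r ∈ 𝒜 i) (n : ℤ) (y : N) :
    r • pu.iota n y = pu.iota (i + n) (r • y) := by
  have h := pu.compat i n r _ hr (pu.iota_mem n y)
  rw [equiv_iota] at h
  rw [← h, iota_equiv]

theorem support_iota_subset (y : N) :
    Function.support (fun m => g.toFun (pu.iota m y)) ⊆ {n | M.grading n ≠ ⊥} :=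
  fun m hm hbot => hm (M.eq_zero_of_mem_of_eq_bot (g.map_mem m _ (pu.iota_mem m y)) hbot)

variable [GradedRing 𝒜]

def counit : P.carrier →ₗ[R] N :=
  P.linearMapOfHomogeneous (P.liftAddHom fun n => (pu.equiv n).toAddMonoidHom)
    fun i j r hr z hz => by
      rw [P.liftAddHom_of_mem _ hz, P.liftAddHom_of_mem _ (P.smul_mem hr hz)]
      exact pu.compat i j r z hr hz

theorem counit_of_mem {n : ℤ} {z : P.carrier} (hz : z ∈ P.grading n) :
    pu.counit z = pu.equiv n ⟨z, hz⟩ :=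
  P.liftAddHom_of_mem _ hz

def shift (c : ℤ) : P.carrier →ₗ[R] P.carrier :=
  P.linearMapOfHomogeneous
    (P.liftAddHom fun n => (pu.iota (n - c)).comp (pu.equiv n).toAddMonoidHom)
    fun i j r hr z hz => by
      rw [P.liftAddHom_of_mem _ hz, P.liftAddHom_of_mem _ (P.smul_mem hr hz)]
      simp only [AddMonoidHom.coe_comp, AddEquiv.coe_toAddMonoidHom, Function.comp_apply]
      rw [pu.compat i j r z hr hz, pu.smul_iota hr, add_sub_assoc]

theorem shift_of_mem (c : ℤ) {n : ℤ} {z : P.carrier} (hz : z ∈ P.grading n) :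
    pu.shift c z = pu.iota (n - c) (pu.equiv n ⟨z, hz⟩) :=
  P.liftAddHom_of_mem _ hz

theorem shift_zero : pu.shift 0 = LinearMap.id :=
  GradedMod.linearMap_ext fun n z hz => by
    rw [pu.shift_of_mem 0 hz, sub_zero, pu.iota_equiv, LinearMap.id_apply]

noncomputable def transpose (hfin : {n | M.grading n ≠ ⊥}.Finite) : N →ₗ[R] M.carrier :=
  (AddMonoidHom.mk' (fun y => ∑ᶠ m, g.toFun (pu.iota m y)) fun y y' => by
      change ∑ᶠ m, g.toFun (pu.iota m (y + y'))
        = ∑ᶠ m, g.toFun (pu.iota m y) + ∑ᶠ m, g.toFun (pu.iota m y')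
      simp only [map_add]
      exact finsum_add_distrib (hfin.subset (pu.support_iota_subset g y))
        (hfin.subset (pu.support_iota_subset g y'))).toLinearMapOfHomogeneous 𝒜
    fun i r hr y => by
      change ∑ᶠ m, g.toFun (pu.iota m (r • y)) = r • ∑ᶠ m, g.toFun (pu.iota m y)
      rw [smul_finsum' r (hfin.subset (pu.support_iota_subset g y))]
      simp_rw [← g.toFun.map_smul, pu.smul_iota hr]
      exact (finsum_comp_equiv (Equiv.addLeft i)).symm

theorem transpose_apply (hfin : {n | M.grading n ≠ ⊥}.Finite) (y : N) :
    pu.transpose g hfin y = ∑ᶠ m, g.toFun (pu.iota m y) :=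
  rfl

def conjShift (c : ℤ) : Module.End R M.carrier :=
  g.toFun ∘ₗ pu.shift c ∘ₗ s.toFun

theorem conjShift_of_mem (c : ℤ) {n : ℤ} {x : M.carrier} (hx : x ∈ M.grading n) :
    pu.conjShift g s c x = g.toFun (pu.iota (n - c) (pu.equiv n ⟨s.toFun x, s.map_mem n x hx⟩)) :=
  congrArg g.toFun (pu.shift_of_mem c _)

theorem conjShift_mem (c : ℤ) {n : ℤ} {x : M.carrier} (hx : x ∈ M.grading n) :
    pu.conjShift g s c x ∈ M.grading (n - c) := by
  rw [pu.conjShift_of_mem g s c hx]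
  exact g.map_mem _ _ (pu.iota_mem _ _)

theorem conjShift_zero (hs : ∀ x : M.carrier, g.toFun (s.toFun x) = x) :
    pu.conjShift g s 0 = 1 := by
  ext x
  simp [conjShift, shift_zero, hs]

theorem transpose_comp_counit_comp (hfin : {n | M.grading n ≠ ⊥}.Finite) (C : Finset ℤ)
    (hC : ∀ n m, M.grading n ≠ ⊥ → M.grading m ≠ ⊥ → n - m ∈ C) :
    pu.transpose g hfin ∘ₗ pu.counit ∘ₗ s.toFun = ∑ c ∈ C, pu.conjShift g s c := by
  refine GradedMod.linearMap_ext fun n x hx => ?_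
  by_cases hn : M.grading n = ⊥
  · simp [M.eq_zero_of_mem_of_eq_bot hx hn]
  set y := pu.equiv n ⟨s.toFun x, s.map_mem n x hx⟩
  have hsupp : Function.support (fun c => g.toFun (pu.iota (n - c) y)) ⊆ C := fun c hc => by
    simpa using hC n (n - c) hn (pu.support_iota_subset g y hc)
  calc (pu.transpose g hfin ∘ₗ pu.counit ∘ₗ s.toFun) x = ∑ᶠ m, g.toFun (pu.iota m y) := by
        rw [LinearMap.comp_apply, LinearMap.comp_apply, pu.counit_of_mem, transpose_apply]
    _ = ∑ᶠ c, g.toFun (pu.iota (n - c) y) := (finsum_comp_equiv (Equiv.subLeft n)).symm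
    _ = ∑ c ∈ C, g.toFun (pu.iota (n - c) y) := finsum_eq_finsetSum_of_support_subset _ hsupp
    _ = (∑ c ∈ C, pu.conjShift g s c) x := by
        simp only [LinearMap.sum_apply, pu.conjShift_of_mem g s _ hx, y]

theorem isNilpotent_sum_conjShift_pos (hfin : {n | M.grading n ≠ ⊥}.Finite) (C : Finset ℤ) :
    IsNilpotent (∑ c ∈ C with 0 < c, pu.conjShift g s c) :=
  AddSubgroup.isNilpotent_of_mapsTo_iSup_lt M.grading M.mem_iSup_grading hfin _
    fun n x hx => by
      rw [LinearMap.sum_apply]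
      refine AddSubgroup.sum_mem _ fun c hc => ?_
      have hc : 0 < c := (Finset.mem_filter.1 hc).2
      exact AddSubgroup.mem_iSup_of_mem (n - c)
        (AddSubgroup.mem_iSup_of_mem (by omega) (pu.conjShift_mem g s c hx))

theorem isNilpotent_sum_conjShift_neg (hfin : {n | M.grading n ≠ ⊥}.Finite) (C : Finset ℤ) :
    IsNilpotent (∑ c ∈ C with c < 0, pu.conjShift g s c) := by
  refine AddSubgroup.isNilpotent_of_mapsTo_iSup_lt (fun n => M.grading (-n))
    (fun x => ?_) (hfin.preimage neg_injective.injOn) _ fun n x hx => ?_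
  · change x ∈ ⨆ n, M.grading (Equiv.neg ℤ n)
    rw [(Equiv.neg ℤ).iSup_comp (g := M.grading)]
    exact M.mem_iSup_grading x
  · rw [LinearMap.sum_apply]
    refine AddSubgroup.sum_mem _ fun c hc => ?_
    have hc : c < 0 := (Finset.mem_filter.1 hc).2
    have hmem := pu.conjShift_mem g s c hx
    rw [← neg_add'] at hmem
    exact AddSubgroup.mem_iSup_of_mem (n + c) (AddSubgroup.mem_iSup_of_mem (by omega) hmem)

end IsPullUp

theorem stmt_6_general (R : Type) [Ring R] (𝒜 : ℤ → AddSubgroup R) [GradedRing 𝒜]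
    (N : Type) [AddCommGroup N] [Module R N]
    (M : GradedMod R 𝒜)
    (hfin : {n : ℤ | M.grading n ≠ ⊥}.Finite)
    (P : GradedMod R 𝒜) (pu : IsPullUp R 𝒜 N P)
    (g : GradedHom R P M) (s : GradedHom R M P)
    (hs : ∀ x : M.carrier, g.toFun (s.toFun x) = x) :
    ∃ (k : ℕ) (ii : M.carrier →ₗ[R] (Fin k → N)) (pp : (Fin k → N) →ₗ[R] M.carrier),
      pp.comp ii = LinearMap.id := by
  obtain ⟨C, hC0, hC⟩ := hfin.exists_finset_sub_mem
  have hmem := comp_mem_endFactoringThrough (pu.transpose g hfin) (pu.counit ∘ₗ s.toFun)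
  rw [pu.transpose_comp_counit_comp g s hfin C hC,
    C.sum_eq_add_sum_pos_add_sum_neg hC0, pu.conjShift_zero g s hs] at hmem
  exact mem_endFactoringThrough.1 <| TwoSidedIdeal.one_mem_of_one_add_add_mem _
    (pu.isNilpotent_sum_conjShift_pos g s hfin C) (pu.isNilpotent_sum_conjShift_neg g s hfin C)
    hmem

/-- if `M` is a locally finite graded module of finite graded length
and `pN → M` is a split epimorphism in `Gr-R`, then `qM ∈ add N`. -/
theorem stmt_6 (R : Type) [Ring R] (𝒜 : ℤ → AddSubgroup R) [GradedRing 𝒜]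
    (N : Type) [AddCommGroup N] [Module R N]
    (M : GradedMod R 𝒜)
    (hlf : ∀ n : ℤ, IsNoetherian (degZero R 𝒜) (M.grading n) ∧
      IsArtinian (degZero R 𝒜) (M.grading n))
    (hfin : {n : ℤ | M.grading n ≠ ⊥}.Finite)
    (P : GradedMod R 𝒜) (pu : IsPullUp R 𝒜 N P)
    (g : GradedHom R P M) (s : GradedHom R M P)
    (hs : ∀ x : M.carrier, g.toFun (s.toFun x) = x) :
    ∃ (k : ℕ) (ii : M.carrier →ₗ[R] (Fin k → N)) (pp : (Fin k → N) →ₗ[R] M.carrier),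
      pp.comp ii = LinearMap.id :=
  stmt_6_general R 𝒜 N M hfin P pu g s hs
end

section
/- Let S be a ring and P a countably generated S-module such that every finite tuple of elements of P is contained in a finitely presented pure submodule of P. Then P is pure-projective. -/
open DirectSum

/-!
Enumerate generators `x₀, x₁, …` of `P` and build an increasing chain `A₀ ≤ A₁ ≤ ⋯` of finitely
presented pure submodules with `xₙ ∈ Aₙ`. A pure submodule has the lifting property against
finitely presented modules, and `Aₙ₊₁ ⧸ Aₙ` is finitely presented, so `Aₙ` has a finitely
presented complement `Cₙ` in `Aₙ₊₁`. Hence `P` is the internal direct sum of `A₀, C₀, C₁, …`.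
-/

theorem iSupIndep_of_disjoint_partialSups {R M : Type*} [Ring R] [AddCommGroup M] [Module R M]
    {K : ℕ → Submodule R M} (h : ∀ n, Disjoint (partialSups K n) (K (n + 1))) :
    iSupIndep K := by
  classical
  rw [iSupIndep_iff_finsetSum_eq_zero_imp_eq_zero]
  intro s
  induction s using Finset.induction_on_max with
  | empty => simp
  | insert m s hlt ih =>
    intro v hv hsum
    rw [Finset.sum_insert fun hm => (hlt m hm).false] at hsum
    have hvm : v m = 0 := by
      cases m with
      | zero =>
        have hs : s = ∅ :=
          Finset.eq_empty_of_forall_notMem fun i hi => Nat.not_lt_zero _ (hlt i hi)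
        simpa [hs] using hsum
      | succ n =>
        have hs : ∑ i ∈ s, v i ∈ partialSups K n := Submodule.sum_mem _ fun i hi =>
          le_partialSups_of_le K (Nat.lt_succ_iff.mp (hlt i hi))
            (hv i (Finset.mem_insert_of_mem hi))
        have hvn := hv _ (Finset.mem_insert_self _ _)
        rw [eq_neg_of_add_eq_zero_left hsum] at hvn ⊢
        exact neg_eq_zero.mpr <| Submodule.disjoint_def.mp (h n) _ hs (neg_mem_iff.mp hvn)
    rw [hvm, zero_add] at hsum
    intro i hi
    rcases Finset.mem_insert.mp hi with rfl | hi
    · exact hvm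
    · exact ih v (fun i hi => hv i (Finset.mem_insert_of_mem hi)) hsum i hi

section PurePresentation

variable {S : Type} [Ring S] {P : Type} [AddCommGroup P] [Module S P]

theorem IsPureSubmodule.exists_mem_solution {A : Submodule S P} (hA : IsPureSubmodule S A)
    {ι κ : Type*} [Finite ι] [Finite κ] (c : ι → κ →₀ S) (x : κ → P)
    (hx : ∀ i, Finsupp.linearCombination S x (c i) ∈ A) :
    ∃ y : κ → P, (∀ j, y j ∈ A) ∧
      ∀ i, Finsupp.linearCombination S y (c i) = Finsupp.linearCombination S x (c i) := by
  have := Fintype.ofFinite κ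
  obtain ⟨k, ⟨eι⟩⟩ := Finite.exists_equiv_fin ι
  obtain ⟨l, ⟨eκ⟩⟩ := Finite.exists_equiv_fin κ
  have hsum (y : κ → P) (i : ι) :
      Finsupp.linearCombination S y (c i) = ∑ j, c i (eκ.symm j) • y (eκ.symm j) := by
    rw [Finsupp.linearCombination_apply, Finsupp.sum_fintype _ _ (by simp),
      ← eκ.symm.sum_comp]
  obtain ⟨y, hyA, hy⟩ := hA k l (fun i j => c (eι.symm i) (eκ.symm j))
    (fun i => Finsupp.linearCombination S x (c (eι.symm i))) (fun i => hx _)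
    ⟨x ∘ eκ.symm, fun i => (hsum x _).symm⟩
  refine ⟨y ∘ eκ, fun j => hyA _, fun i => ?_⟩
  simpa [hsum] using hy (eι i)

theorem IsPureSubmodule.exists_lift {A : Submodule S P} (hA : IsPureSubmodule S A)
    {Q : Type*} [AddCommGroup Q] [Module S Q] [Module.FinitePresentation S Q]
    (φ : Q →ₗ[S] P ⧸ A) : ∃ ψ : Q →ₗ[S] P, A.mkQ ∘ₗ ψ = φ := by
  obtain ⟨pres, _, _⟩ := Module.finitePresentation_iff_exists_presentation.{0, 0}.mp
    (inferInstance : Module.FinitePresentation S Q)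
  choose b hb using fun g => A.mkQ_surjective (φ (pres.var g))
  have hmkQ_b : A.mkQ ∘ₗ Finsupp.linearCombination S b = φ ∘ₗ pres.π := by
    ext g
    simp [hb]
  have hrel (r : pres.R) : Finsupp.linearCombination S b (pres.relation r) ∈ A := by
    rw [← Submodule.ker_mkQ A, LinearMap.mem_ker, ← LinearMap.comp_apply, hmkQ_b]
    simp
  -- The lifts `b` satisfy the relations of `Q` only modulo `A`; purity supplies a correction
  -- `x` inside `A` after which they satisfy them exactly.
  obtain ⟨x, hxA, hx⟩ := hA.exists_mem_solution pres.relation b hrel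
  let sol : pres.Solution P :=
    { var := b - x
      linearCombination_var_relation := fun r => by
        simp only [Finsupp.linearCombination_apply, Pi.sub_apply, smul_sub, Finsupp.sum_sub]
        rw [← Finsupp.linearCombination_apply, ← Finsupp.linearCombination_apply, hx,
          sub_self] }
  refine ⟨pres.desc sol,
    pres.postcomp_injective (Module.Relations.Solution.ext (funext fun g => ?_))⟩
  simpa [sol, (Submodule.Quotient.mk_eq_zero A).mpr (hxA g)] using hb g

theorem Submodule.finitePresentation_quotient_submoduleOf {A B : Submodule S P} (hAB : A ≤ B)
    [Module.Finite S A] [Module.FinitePresentation S B] :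
    Module.FinitePresentation S (B ⧸ A.submoduleOf B) :=
  Module.finitePresentation_of_surjective _ (A.submoduleOf B).mkQ_surjective <| by
    rw [Submodule.ker_mkQ, ← Module.Finite.iff_fg]
    exact .equiv (Submodule.submoduleOfEquivOfLe hAB).symm

theorem IsPureSubmodule.exists_disjoint_sup_eq {A B : Submodule S P} (hA : IsPureSubmodule S A)
    (hAB : A ≤ B) [Module.FinitePresentation S (B ⧸ A.submoduleOf B)] :
    ∃ C : Submodule S P, Disjoint A C ∧ A ⊔ C = B ∧ Module.FinitePresentation S C := by
  let φ := (A.submoduleOf B).mapQ A B.subtype le_rfl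
  have hφ : ∀ q, φ q = 0 → q = 0 := by
    intro q
    induction q using Submodule.Quotient.induction_on with | H b => ?_
    change Submodule.Quotient.mk (b : P) = 0 → _
    rw [Submodule.Quotient.mk_eq_zero, Submodule.Quotient.mk_eq_zero]
    exact id
  obtain ⟨ψ, hψ⟩ := hA.exists_lift φ
  have hψ_mem (q : B ⧸ A.submoduleOf B) : ψ q ∈ A → q = 0 := by
    intro h
    apply hφ
    rw [← hψ, LinearMap.comp_apply, Submodule.mkQ_apply, Submodule.Quotient.mk_eq_zero]
    exact h
  have hψ_sub (b : B) : (b : P) - ψ (Submodule.Quotient.mk b) ∈ A := by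
    have : A.mkQ (ψ (Submodule.Quotient.mk b)) = A.mkQ b := LinearMap.congr_fun hψ _
    rw [← Submodule.Quotient.mk_eq_zero, Submodule.Quotient.mk_sub]
    exact sub_eq_zero.mpr this.symm
  refine ⟨LinearMap.range ψ, ?_, ?_, .of_equiv (LinearEquiv.ofInjective ψ ?_)⟩
  · rw [Submodule.disjoint_def]
    rintro _ hA ⟨q, rfl⟩
    rw [hψ_mem q hA, map_zero]
  · apply le_antisymm
    · refine sup_le hAB ?_
      rintro _ ⟨q, rfl⟩
      induction q using Submodule.Quotient.induction_on with | H b => ?_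
      simpa using B.sub_mem b.2 (hAB (hψ_sub b))
    · intro b hb
      simpa using Submodule.add_mem_sup (hψ_sub ⟨b, hb⟩)
        (LinearMap.mem_range_self ψ (Submodule.Quotient.mk ⟨b, hb⟩))
  · rw [← LinearMap.ker_eq_bot, eq_bot_iff]
    intro q hq
    exact hψ_mem q (by simp_all)

theorem exists_pure_finitePresentation_chain
    (hcg : ∃ s : Set P, s.Countable ∧ Submodule.span S s = ⊤)
    (h : ∀ t : Finset P, ∃ A : Submodule S P, (↑t : Set P) ⊆ A ∧
      Module.FinitePresentation S A ∧ IsPureSubmodule S A) :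
    ∃ A : ℕ → Submodule S P, Monotone A ∧ (∀ n, Module.FinitePresentation S (A n)) ∧
      (∀ n, IsPureSubmodule S (A n)) ∧ ⨆ n, A n = ⊤ := by
  classical
  obtain ⟨s, hs, hspan⟩ := hcg
  obtain ⟨x, hx⟩ := (hs.insert 0).exists_eq_range (Set.insert_nonempty 0 s)
  choose E hsub hfp hpure using h
  have hfg (t : Finset P) : (E t).FG := by
    have := hfp t
    exact Module.Finite.iff_fg.mp inferInstance
  choose gen hgen using hfg
  let t : ℕ → Finset P := fun n => Nat.rec ∅ (fun n tn => insert (x n) (gen tn)) n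
  have hx_mem (n : ℕ) : x n ∈ E (t (n + 1)) := hsub _ (Finset.mem_insert_self _ _)
  refine ⟨fun n => E (t (n + 1)), monotone_nat_of_le_succ fun n => ?_, fun n => hfp _,
    fun n => hpure _, ?_⟩
  · rw [← hgen, Submodule.span_le]
    exact (Finset.coe_subset.mpr (Finset.subset_insert _ _)).trans (hsub _)
  · rw [eq_top_iff, ← hspan, ← Submodule.span_insert_zero, hx, Submodule.span_le]
    rintro _ ⟨n, rfl⟩
    exact Submodule.mem_iSup_of_mem n (hx_mem n)

theorem isPureProjective_of_isInternal {ι : Type} [DecidableEq ι] {K : ι → Submodule S P}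
    [∀ i, Module.FinitePresentation S (K i)] (hK : DirectSum.IsInternal K) :
    IsPureProjective S P :=
  ⟨ι, fun i => ModuleCat.of S (K i),
    fun i => inferInstanceAs (Module.FinitePresentation S (K i)),
    (LinearEquiv.ofBijective (DirectSum.coeLinearMap K) hK).symm.toLinearMap,
    DirectSum.coeLinearMap K,
    LinearMap.ext (LinearEquiv.ofBijective (DirectSum.coeLinearMap K) hK).apply_symm_apply⟩

end PurePresentation

/-- a countably generated module in which every finite tuple is
contained in a finitely presented pure submodule is pure-projective. -/
theorem stmt_11 (S : Type) [Ring S] (P : Type) [AddCommGroup P] [Module S P]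
    (hcg : ∃ s : Set P, s.Countable ∧ Submodule.span S s = ⊤)
    (h : ∀ t : Finset P, ∃ A : Submodule S P, (↑t : Set P) ⊆ A ∧
      Module.FinitePresentation S A ∧ IsPureSubmodule S A) :
    IsPureProjective S P := by
  obtain ⟨A, hmono, hfp, hpure, htop⟩ := exists_pure_finitePresentation_chain hcg h
  have hcompl (n : ℕ) : ∃ C : Submodule S P,
      Disjoint (A n) C ∧ A n ⊔ C = A (n + 1) ∧ Module.FinitePresentation S C :=
    have := Submodule.finitePresentation_quotient_submoduleOf (hmono n.le_succ)
    (hpure n).exists_disjoint_sup_eq (hmono n.le_succ)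
  choose C hdisj hsup hCfp using hcompl
  let K : ℕ → Submodule S P
    | 0 => A 0
    | n + 1 => C n
  have hK : partialSups K = A := by
    ext1 n
    induction n with
    | zero => rfl
    | succ n ih =>
      rw [partialSups_add_one, ih]
      exact hsup n
  have (n : ℕ) : Module.FinitePresentation S ↥(K n) := by
    cases n
    exacts [hfp 0, hCfp _]
  refine isPureProjective_of_isInternal (K := K) <|
    (DirectSum.isInternal_submodule_iff_iSupIndep_and_iSup_eq_top K).mpr ⟨?_, ?_⟩
  · exact iSupIndep_of_disjoint_partialSups fun n => hK ▸ hdisj n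
  · rw [← iSup_partialSups_eq, hK, htop]
end
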